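/- For any Pauli operators P_A on A, Q_D on D, and a Clifford unitary U with forward map Λ_D (i.e. U(P_A⊗I)U^† ≃ Λ_C(P_A)⊗Λ_D(P_A)), the OTOC value α_{P_A,Q_D} := (1/d)Tr(U P_A ⊗ I U^† · Q_D · U P_A^† ⊗ I U^† · Q_D^†) satisfies (1/d_D^2) ∑_{Q_D ∈ Pauli_D} α_{P_A,Q_D} F_{Q_D,R_D} = δ_{Λ_D(P_A), R_D}, where F_{Q,R} = (1/d_D)Tr_D(QRQ^†R^†). -/

import Mathlib

open Matrix Kronecker BigOperators

/-- The `n`-qubit Pauli operator `X^x Z^z` (symplectic representation). -/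
noncomputable def pauli {n : ℕ} (x z : Fin n → ZMod 2) :
    Matrix (Fin n → ZMod 2) (Fin n → ZMod 2) ℂ :=
  fun j k => if j = k + x then ((-1 : ℂ)) ^ (∑ i, (z i * k i).val) else 0

/-- The OTOC `α_{P_A,Q_D} = (1/d) Tr(P_A(t) Q_D P_A(t)† Q_D†)` with
`P_A(t) = U (P_A ⊗ I_B) U†` and `Q_D` acting on `D`. -/
noncomputable def otoc (nA nB nC nD : ℕ)
    (U : Matrix ((Fin nC → ZMod 2) × (Fin nD → ZMod 2))
      ((Fin nA → ZMod 2) × (Fin nB → ZMod 2)) ℂ)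
    (x z : Fin nA → ZMod 2) (xq zq : Fin nD → ZMod 2) : ℂ :=
  ((2 ^ nC * 2 ^ nD : ℂ))⁻¹ *
    (U * (pauli x z ⊗ₖ (1 : Matrix (Fin nB → ZMod 2) (Fin nB → ZMod 2) ℂ)) * Uᴴ *
      ((1 : Matrix (Fin nC → ZMod 2) (Fin nC → ZMod 2) ℂ) ⊗ₖ pauli xq zq) *
      U * ((pauli x z)ᴴ ⊗ₖ (1 : Matrix (Fin nB → ZMod 2) (Fin nB → ZMod 2) ℂ)) * Uᴴ *
      ((1 : Matrix (Fin nC → ZMod 2) (Fin nC → ZMod 2) ℂ) ⊗ₖ (pauli xq zq)ᴴ)).trace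

/-- The commutation-phase matrix `F_{Q,R} = (1/d_D) Tr(QRQ†R†)` on `D`. -/
noncomputable def Fmat (nD : ℕ) (q r : (Fin nD → ZMod 2) × (Fin nD → ZMod 2)) : ℂ :=
  ((2 ^ nD : ℂ))⁻¹ * (pauli q.1 q.2 * pauli r.1 r.2 *
    (pauli q.1 q.2)ᴴ * (pauli r.1 r.2)ᴴ).trace

/-!
Since `U` maps `P_A ⊗ I` to a phase times `P_C ⊗ P_D`, the OTOC collapses to the commutation
phase of `P_D` and `Q_D`: `α_{P_A,Q_D} = F_{(xd,zd),Q_D}`. The phases `F_{Q,R}` are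
`(-1)^{ω(Q,R)}` for the symplectic form `ω` on Pauli labels, so `Q ↦ F_{P,Q} F_{Q,R}` is the
character `(-1)^{ω(P+R, ·)}`. By nondegeneracy of `ω` it is trivial exactly when `P = R`, and
character orthogonality gives `∑_Q F_{P,Q} F_{Q,R} = d_D² δ_{P,R}`.
-/

lemma AddChar.map_sum_eq_prod {A M ι : Type*} [AddCommMonoid A] [CommMonoid M]
    (ψ : AddChar A M) (s : Finset ι) (f : ι → A) :
    ψ (∑ i ∈ s, f i) = ∏ i ∈ s, ψ (f i) := by
  induction s using Finset.cons_induction with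
  | empty => simp
  | cons i s _ ih => rw [Finset.sum_cons, Finset.prod_cons, AddChar.map_add_eq_mul, ih]

noncomputable def signChar : AddChar (ZMod 2) ℂ where
  toFun a := (-1) ^ a.val
  map_zero_eq_one' := by simp
  map_add_eq_mul' a b := by rw [ZMod.val_add, ← neg_one_pow_eq_pow_mod_two, pow_add]

lemma signChar_apply (a : ZMod 2) : signChar a = (-1) ^ a.val := rfl

lemma signChar_mul_self (a : ZMod 2) : signChar a * signChar a = 1 := by
  rw [← AddChar.map_add_eq_mul, ZModModule.add_self, AddChar.map_zero_eq_one]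

lemma star_signChar (a : ZMod 2) : star (signChar a) = signChar a := by
  simp [signChar_apply]

lemma signChar_eq_one_iff (a : ZMod 2) : signChar a = 1 ↔ a = 0 := by
  obtain rfl | rfl : a = 0 ∨ a = 1 := by revert a; decide
  · simp
  · norm_num [signChar_apply, ZMod.val_one]

section Symplectic

variable {ι : Type*} [Fintype ι]

def sympForm (a b : (ι → ZMod 2) × (ι → ZMod 2)) : ZMod 2 :=
  a.2 ⬝ᵥ b.1 + b.2 ⬝ᵥ a.1

lemma sympForm_comm (a b : (ι → ZMod 2) × (ι → ZMod 2)) : sympForm a b = sympForm b a :=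
  add_comm _ _

lemma sympForm_add_left (a a' b : (ι → ZMod 2) × (ι → ZMod 2)) :
    sympForm (a + a') b = sympForm a b + sympForm a' b := by
  simp only [sympForm, Prod.fst_add, Prod.snd_add, add_dotProduct, dotProduct_add]; abel

lemma sympForm_add_right (a b b' : (ι → ZMod 2) × (ι → ZMod 2)) :
    sympForm a (b + b') = sympForm a b + sympForm a b' := by
  rw [sympForm_comm, sympForm_add_left, sympForm_comm b, sympForm_comm b']

lemma sympForm_nondegenerate [DecidableEq ι] {u : (ι → ZMod 2) × (ι → ZMod 2)}
    (h : ∀ q, sympForm u q = 0) : u = 0 := by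
  refine Prod.ext (funext fun i => ?_) (funext fun i => ?_)
  · simpa [sympForm] using h (0, Pi.single i 1)
  · simpa [sympForm] using h (Pi.single i 1, 0)

lemma sum_signChar_sympForm [DecidableEq ι] (u : (ι → ZMod 2) × (ι → ZMod 2)) :
    ∑ q, signChar (sympForm u q) = if u = 0 then ((2 : ℂ) ^ Fintype.card ι) ^ 2 else 0 := by
  classical
  let ψ : AddChar ((ι → ZMod 2) × (ι → ZMod 2)) ℂ :=
    { toFun := fun q => signChar (sympForm u q)
      map_zero_eq_one' := by simp [sympForm]
      map_add_eq_mul' := fun q q' => by rw [sympForm_add_right, AddChar.map_add_eq_mul] }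
  have hψ : ψ = 0 ↔ u = 0 := by
    refine AddChar.eq_zero_iff.trans ⟨fun h => sympForm_nondegenerate fun q => ?_, ?_⟩
    · exact (signChar_eq_one_iff _).mp (h q)
    · rintro rfl q; simp [ψ, sympForm]
  calc ∑ q, signChar (sympForm u q) = ∑ q, ψ q := rfl
    _ = _ := by rw [ψ.sum_eq_ite]; simp [hψ, sq]

end Symplectic

section Pauli

variable {n : ℕ}

lemma pauli_apply (x z j k : Fin n → ZMod 2) :
    pauli x z j k = if j = k + x then signChar (z ⬝ᵥ k) else 0 := by
  simp only [pauli, dotProduct, AddChar.map_sum_eq_prod, signChar_apply,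
    Finset.prod_pow_eq_pow_sum]

lemma pauli_zero_zero : pauli (0 : Fin n → ZMod 2) 0 = 1 := by
  ext j k
  simp [pauli_apply, Matrix.one_apply]

lemma pauli_mul_pauli (x z x' z' : Fin n → ZMod 2) :
    pauli x z * pauli x' z' = signChar (z ⬝ᵥ x') • pauli (x + x') (z + z') := by
  ext j l
  rw [Matrix.mul_apply, Fintype.sum_eq_single (l + x')]
  · have hassoc : l + x' + x = l + (x + x') := by abel
    simp only [pauli_apply, if_true, Matrix.smul_apply, smul_eq_mul, hassoc]
    split_ifs
    · simp only [dotProduct_add, add_dotProduct, AddChar.map_add_eq_mul]; ring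
    · simp
  · intro k hk
    simp [pauli_apply, hk]

lemma conjTranspose_pauli (x z : Fin n → ZMod 2) :
    (pauli x z)ᴴ = signChar (z ⬝ᵥ x) • pauli x z := by
  ext j k
  have hswap : k = j + x ↔ j = k + x := by
    rw [← sub_eq_iff_eq_add, ZModModule.sub_eq_add, eq_comm]
  simp only [Matrix.conjTranspose_apply, pauli_apply, hswap, Matrix.smul_apply, smul_eq_mul]
  split_ifs with h
  · rw [star_signChar, h, dotProduct_add, AddChar.map_add_eq_mul, mul_comm]
  · simp

lemma pauli_mul_conjTranspose_pauli (x z : Fin n → ZMod 2) :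
    pauli x z * (pauli x z)ᴴ = 1 := by
  rw [conjTranspose_pauli, Matrix.mul_smul, pauli_mul_pauli, smul_smul, signChar_mul_self,
    ZModModule.add_self, ZModModule.add_self, pauli_zero_zero, one_smul]

lemma pauli_mul_pauli_comm (a b : (Fin n → ZMod 2) × (Fin n → ZMod 2)) :
    pauli a.1 a.2 * pauli b.1 b.2
      = signChar (sympForm a b) • (pauli b.1 b.2 * pauli a.1 a.2) := by
  rw [pauli_mul_pauli, pauli_mul_pauli, smul_smul, sympForm, AddChar.map_add_eq_mul, mul_assoc,
    signChar_mul_self, mul_one, add_comm b.1, add_comm b.2]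

lemma pauli_group_commutator (a b : (Fin n → ZMod 2) × (Fin n → ZMod 2)) :
    pauli a.1 a.2 * pauli b.1 b.2 * (pauli a.1 a.2)ᴴ * (pauli b.1 b.2)ᴴ
      = signChar (sympForm a b) • 1 := by
  rw [pauli_mul_pauli_comm, Matrix.smul_mul, Matrix.smul_mul, Matrix.mul_assoc (pauli b.1 b.2),
    pauli_mul_conjTranspose_pauli, Matrix.mul_one, pauli_mul_conjTranspose_pauli]

lemma Fmat_eq_signChar_sympForm (q r : (Fin n → ZMod 2) × (Fin n → ZMod 2)) :
    Fmat n q r = signChar (sympForm q r) := by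
  rw [Fmat, pauli_group_commutator, Matrix.trace_smul, Matrix.trace_one]
  simp [mul_comm (signChar _)]

lemma sum_Fmat_mul_Fmat (p r : (Fin n → ZMod 2) × (Fin n → ZMod 2)) :
    ((2 ^ n : ℂ) ^ 2)⁻¹ * ∑ q, Fmat n p q * Fmat n q r = if p = r then 1 else 0 := by
  have hpq : ∀ q, Fmat n p q * Fmat n q r = signChar (sympForm (p + r) q) := fun q => by
    rw [Fmat_eq_signChar_sympForm, Fmat_eq_signChar_sympForm, sympForm_comm q,
      sympForm_add_left, AddChar.map_add_eq_mul]
  simp only [hpq, sum_signChar_sympForm, Fintype.card_fin, add_eq_zero_iff_eq_neg,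
    ZModModule.neg_eq_self]
  split_ifs <;> simp

end Pauli

lemma trace_conj_kronecker_commutator {m n a b : Type*} [Fintype m] [DecidableEq m]
    [Fintype n] [Fintype a] [Fintype b] [DecidableEq b]
    (U : Matrix (m × n) (a × b) ℂ) (P : Matrix a a ℂ) {c : ℂ} (hc : ‖c‖ = 1)
    {A : Matrix m m ℂ} (hA : A * Aᴴ = 1) (B Q : Matrix n n ℂ)
    (hK : U * (P ⊗ₖ (1 : Matrix b b ℂ)) * Uᴴ = c • (A ⊗ₖ B)) :
    (U * (P ⊗ₖ (1 : Matrix b b ℂ)) * Uᴴ * ((1 : Matrix m m ℂ) ⊗ₖ Q) *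
      U * (Pᴴ ⊗ₖ (1 : Matrix b b ℂ)) * Uᴴ * ((1 : Matrix m m ℂ) ⊗ₖ Qᴴ)).trace
      = Fintype.card m * (B * Q * Bᴴ * Qᴴ).trace := by
  have hK_conj : U * (Pᴴ ⊗ₖ (1 : Matrix b b ℂ)) * Uᴴ = (c • (A ⊗ₖ B))ᴴ := by
    rw [← hK]
    simp only [conjTranspose_mul, conjTranspose_kronecker, conjTranspose_one,
      conjTranspose_conjTranspose, Matrix.mul_assoc]
  have hcc : star c * c = 1 := by
    rw [Complex.star_def, Complex.conj_mul', hc]; norm_num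
  have hprod : U * (P ⊗ₖ (1 : Matrix b b ℂ)) * Uᴴ * ((1 : Matrix m m ℂ) ⊗ₖ Q) *
      U * (Pᴴ ⊗ₖ (1 : Matrix b b ℂ)) * Uᴴ * ((1 : Matrix m m ℂ) ⊗ₖ Qᴴ)
      = (A * Aᴴ) ⊗ₖ (B * Q * Bᴴ * Qᴴ) := by
    have hregroup : ∀ X Y : Matrix (m × n) (m × n) ℂ,
        U * (P ⊗ₖ (1 : Matrix b b ℂ)) * Uᴴ * X *
            U * (Pᴴ ⊗ₖ (1 : Matrix b b ℂ)) * Uᴴ * Y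
          = (U * (P ⊗ₖ (1 : Matrix b b ℂ)) * Uᴴ) * X *
            (U * (Pᴴ ⊗ₖ (1 : Matrix b b ℂ)) * Uᴴ) * Y := fun X Y => by
      simp only [Matrix.mul_assoc]
    rw [hregroup, hK, hK_conj, conjTranspose_smul, conjTranspose_kronecker]
    simp only [Matrix.smul_mul, Matrix.mul_smul, smul_smul, ← mul_kronecker_mul,
      Matrix.mul_one, hcc, one_smul]
  rw [hprod, trace_kronecker, hA, trace_one]

lemma otoc_eq_Fmat {nA nB nC nD : ℕ}
    (U : Matrix ((Fin nC → ZMod 2) × (Fin nD → ZMod 2))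
      ((Fin nA → ZMod 2) × (Fin nB → ZMod 2)) ℂ)
    {x z : Fin nA → ZMod 2} {c : ℂ} {xc zc : Fin nC → ZMod 2} {xd zd : Fin nD → ZMod 2}
    (hc : ‖c‖ = 1)
    (hK : U * (pauli x z ⊗ₖ (1 : Matrix (Fin nB → ZMod 2) (Fin nB → ZMod 2) ℂ)) * Uᴴ
        = c • (pauli xc zc ⊗ₖ pauli xd zd))
    (xq zq : Fin nD → ZMod 2) :
    otoc nA nB nC nD U x z xq zq = Fmat nD (xd, zd) (xq, zq) := by
  rw [otoc, trace_conj_kronecker_commutator U _ hc (pauli_mul_conjTranspose_pauli _ _) _ _ hK,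
    Fmat, Fintype.card_fun, ZMod.card, Fintype.card_fin]
  push_cast
  field_simp

theorem stmt13_general (nA nB nC nD : ℕ)
    (U : Matrix ((Fin nC → ZMod 2) × (Fin nD → ZMod 2))
      ((Fin nA → ZMod 2) × (Fin nB → ZMod 2)) ℂ)
    (c : (Fin nA → ZMod 2) → (Fin nA → ZMod 2) → ℂ)
    (xc zc : (Fin nA → ZMod 2) → (Fin nA → ZMod 2) → (Fin nC → ZMod 2))
    (xd zd : (Fin nA → ZMod 2) → (Fin nA → ZMod 2) → (Fin nD → ZMod 2))
    (hClif : ∀ x z : Fin nA → ZMod 2, ‖c x z‖ = 1 ∧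
      U * (pauli x z ⊗ₖ (1 : Matrix (Fin nB → ZMod 2) (Fin nB → ZMod 2) ℂ)) * Uᴴ
        = c x z • (pauli (xc x z) (zc x z) ⊗ₖ pauli (xd x z) (zd x z)))
    (x z : Fin nA → ZMod 2)
    (RD : (Fin nD → ZMod 2) × (Fin nD → ZMod 2)) :
    (((2 ^ nD : ℂ)) ^ 2)⁻¹ *
      ∑ QD : (Fin nD → ZMod 2) × (Fin nD → ZMod 2),
        otoc nA nB nC nD U x z QD.1 QD.2 * Fmat nD QD RD
      = if (xd x z, zd x z) = RD then 1 else 0 := by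
  obtain ⟨hc, hK⟩ := hClif x z
  simp only [otoc_eq_Fmat U hc hK]
  exact sum_Fmat_mul_Fmat _ _

/-- `(1/d_D²) ∑_{Q_D} α_{P_A,Q_D} F_{Q_D,R_D} = δ_{Λ_D(P_A),R_D}`. -/
theorem stmt13 (nA nB nC nD : ℕ)
    (U : Matrix ((Fin nC → ZMod 2) × (Fin nD → ZMod 2))
      ((Fin nA → ZMod 2) × (Fin nB → ZMod 2)) ℂ)
    (hU1 : U * Uᴴ = 1) (hU2 : Uᴴ * U = 1)
    (c : (Fin nA → ZMod 2) → (Fin nA → ZMod 2) → ℂ)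
    (xc zc : (Fin nA → ZMod 2) → (Fin nA → ZMod 2) → (Fin nC → ZMod 2))
    (xd zd : (Fin nA → ZMod 2) → (Fin nA → ZMod 2) → (Fin nD → ZMod 2))
    (hClif : ∀ x z : Fin nA → ZMod 2, ‖c x z‖ = 1 ∧
      U * (pauli x z ⊗ₖ (1 : Matrix (Fin nB → ZMod 2) (Fin nB → ZMod 2) ℂ)) * Uᴴ
        = c x z • (pauli (xc x z) (zc x z) ⊗ₖ pauli (xd x z) (zd x z)))
    (x z : Fin nA → ZMod 2)
    (RD : (Fin nD → ZMod 2) × (Fin nD → ZMod 2)) :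
    (((2 ^ nD : ℂ)) ^ 2)⁻¹ *
      ∑ QD : (Fin nD → ZMod 2) × (Fin nD → ZMod 2),
        otoc nA nB nC nD U x z QD.1 QD.2 * Fmat nD QD RD
      = if (xd x z, zd x z) = RD then 1 else 0 :=
  stmt13_general nA nB nC nD U c xc zc xd zd hClif x z RD
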